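/- Let φ be the positive solution of −φ'' + μφ − φ³ = 0 on (0,1) with zero Dirichlet boundary conditions, and let L₋ = −d²/dx² + μ − φ² with Dirichlet boundary conditions on (0,1). Then the kernel of L₋ equals span{φ}, and L₋ is nonnegative: ⟨L₋u, u⟩ ≥ 0 for all u in its domain, with strict positivity on the orthogonal complement of φ. -/

import Mathlib

open Real Set intervalIntegral Filter Topology

lemma SL_pack {u : ℝ → ℝ} (h : ContDiff ℝ 2 u) :
    Differentiable ℝ u ∧ Differentiable ℝ (deriv u) ∧ Continuous (deriv (deriv u)) := by
  have h2 : ContDiff ℝ ((1:WithTop ℕ∞) + 1) u := by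
    have : ((1:WithTop ℕ∞) + 1) = 2 := by norm_num
    rw [this]; exact h
  rw [contDiff_succ_iff_deriv] at h2
  obtain ⟨hd, -, h1⟩ := h2
  rw [contDiff_one_iff_deriv] at h1
  exact ⟨hd, h1.1, h1.2⟩

lemma SL_zero_on_Icc {F : ℝ → ℝ} (hF : Continuous F) (h : ∀ x ∈ Ioo (0:ℝ) 1, F x = 0) :
    ∀ x ∈ Icc (0:ℝ) 1, F x = 0 := by
  have hcl : Set.EqOn F 0 (closure (Ioo (0:ℝ) 1)) :=
    Set.EqOn.closure (fun x hx => h x hx) hF continuous_const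
  intro x hx
  have : x ∈ closure (Ioo (0:ℝ) 1) := by
    rw [closure_Ioo (by norm_num : (0:ℝ) ≠ 1)]; exact hx
  exact hcl this

lemma SL_nbot0 : ((𝓝[Ioo (0:ℝ) 1] 0)).NeBot := by
  apply mem_closure_iff_nhdsWithin_neBot.mp
  rw [closure_Ioo (by norm_num : (0:ℝ) ≠ 1)]
  exact ⟨le_refl 0, by norm_num⟩

lemma SL_nbot1 : ((𝓝[Ioo (0:ℝ) 1] 1)).NeBot := by
  apply mem_closure_iff_nhdsWithin_neBot.mp
  rw [closure_Ioo (by norm_num : (0:ℝ) ≠ 1)]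
  exact ⟨by norm_num, le_refl 1⟩

lemma SL_hopf (μ : ℝ) (hμ : 0 < μ) (φ : ℝ → ℝ)
    (hφreg : ContDiff ℝ 2 φ) (hφ0 : φ 0 = 0)
    (hφpos : ∀ x ∈ Set.Ioo (0:ℝ) 1, 0 < φ x)
    (hφode : ∀ x ∈ Set.Ioo (0:ℝ) 1,
      -(deriv (deriv φ) x) + μ * φ x - (φ x)^3 = 0) :
    0 < deriv φ 0 := by
  obtain ⟨hd1, hd2, hc2⟩ := SL_pack hφreg
  -- the ODE holds on all of [0,1] by continuity
  have hode' : ∀ x ∈ Icc (0:ℝ) 1, deriv (deriv φ) x = μ * φ x - (φ x)^3 := by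
    have hcont : Continuous fun x => deriv (deriv φ) x - (μ * φ x - (φ x)^3) :=
      hc2.sub ((continuous_const.mul hd1.continuous).sub (hd1.continuous.pow 3))
    have := SL_zero_on_Icc hcont
      (fun x hx => by have := hφode x hx; linarith)
    intro x hx; have h5 := this x hx; linarith
  -- nonnegativity of the derivative at 0
  have hslope : Tendsto (slope φ 0) (𝓝[Ioo (0:ℝ) 1] 0) (𝓝 (deriv φ 0)) := by
    have h := hasDerivAt_iff_tendsto_slope.mp (hd1 0).hasDerivAt
    exact h.mono_left (nhdsWithin_mono 0 (fun x hx => ne_of_gt hx.1))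
  have := SL_nbot0
  have hge : 0 ≤ deriv φ 0 := by
    refine ge_of_tendsto hslope ?_
    filter_upwards [eventually_mem_nhdsWithin] with x hx
    rw [slope_def_field, hφ0]
    have := hφpos x hx
    apply div_nonneg <;> [linarith; linarith [hx.1]]
  rcases hge.lt_or_eq with h | h
  · exact h
  exfalso
  -- suppose deriv φ 0 = 0; Grönwall forces φ ≡ 0 near 0
  have hD0 : deriv φ 0 = 0 := h.symm
  obtain ⟨B, hB⟩ := (isCompact_Icc (a := (0:ℝ)) (b := 1)).exists_bound_of_continuousOn
    hd1.continuous.continuousOn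
  have hB0 : 0 ≤ B := le_trans (norm_nonneg _) (hB 0 (by norm_num))
  set K : ℝ := max 1 (μ + B^2) with hK
  have hK1 : (1:ℝ) ≤ K := le_max_left _ _
  have key := norm_le_gronwallBound_of_norm_deriv_right_le
    (f := fun t => (φ t, deriv φ t)) (f' := fun t => (deriv φ t, deriv (deriv φ) t))
    (δ := 0) (K := K) (ε := 0) (a := 0) (b := 1/2)
    (by exact (hd1.continuous.prodMk hd2.continuous).continuousOn)
    (fun x _ => ((hd1 x).hasDerivAt.prodMk (hd2 x).hasDerivAt).hasDerivWithinAt)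
    (by simp [hφ0, hD0])
    ?_ 
  · have := key (1/4) (by norm_num)
    rw [gronwallBound_ε0_δ0] at this
    have h4 : φ (1/4) = 0 := by
      rw [Prod.norm_def] at this
      simp only [Real.norm_eq_abs] at this
      have h1 : |φ (1/4)| ≤ 0 := le_trans (le_max_left _ _) this
      have h2 := abs_nonneg (φ (1/4))
      have : |φ (1/4)| = 0 := le_antisymm h1 h2
      exact abs_eq_zero.mp this
    exact absurd h4 (ne_of_gt (hφpos (1/4) (by norm_num)))
  · intro x hx
    have hx' : x ∈ Icc (0:ℝ) 1 := ⟨hx.1, by linarith [hx.2]⟩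
    have hode := hode' x hx'
    have hφB : |φ x| ≤ B := by simpa using hB x hx'
    rw [Prod.norm_def, Prod.norm_def]
    simp only [Real.norm_eq_abs]
    rw [add_zero]
    apply max_le
    · calc |deriv φ x| ≤ max |φ x| |deriv φ x| := le_max_right _ _
        _ = 1 * max |φ x| |deriv φ x| := (one_mul _).symm
        _ ≤ K * max |φ x| |deriv φ x| := by
            apply mul_le_mul_of_nonneg_right hK1 (le_trans (abs_nonneg _) (le_max_left _ _))
    · rw [hode]
      have h1 : |μ * φ x - φ x ^ 3| ≤ (μ + B^2) * |φ x| := by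
        have : |μ * φ x - φ x ^ 3| ≤ |μ * φ x| + |φ x ^ 3| := abs_sub _ _
        have h2 : |μ * φ x| = μ * |φ x| := by rw [abs_mul, abs_of_pos hμ]
        have h3 : |φ x ^ 3| = |φ x|^2 * |φ x| := by
          rw [← abs_pow, ← abs_mul, ← pow_succ]
        have h4 : |φ x|^2 ≤ B^2 := by
          apply sq_le_sq' <;> nlinarith [abs_nonneg (φ x)]
        nlinarith [abs_nonneg (φ x)]
      calc |μ * φ x - φ x ^ 3| ≤ (μ + B^2) * |φ x| := h1
        _ ≤ K * |φ x| := mul_le_mul_of_nonneg_right (le_max_right _ _) (abs_nonneg _)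
        _ ≤ K * max |φ x| |deriv φ x| := by
            apply mul_le_mul_of_nonneg_left (le_max_left _ _) (by linarith)

lemma SL_hopf1 (μ : ℝ) (hμ : 0 < μ) (φ : ℝ → ℝ)
    (hφreg : ContDiff ℝ 2 φ) (hφ1 : φ 1 = 0)
    (hφpos : ∀ x ∈ Set.Ioo (0:ℝ) 1, 0 < φ x)
    (hφode : ∀ x ∈ Set.Ioo (0:ℝ) 1,
      -(deriv (deriv φ) x) + μ * φ x - (φ x)^3 = 0) :
    deriv φ 1 < 0 := by
  set ψ : ℝ → ℝ := fun t => φ (1 - t) with hψ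
  have hψreg : ContDiff ℝ 2 ψ := hφreg.comp (contDiff_const.sub contDiff_id)
  have hψd : ∀ t, deriv ψ t = -deriv φ (1 - t) := fun t => deriv_comp_const_sub φ 1 t
  have hψdd : ∀ t, deriv (deriv ψ) t = deriv (deriv φ) (1 - t) := by
    intro t
    have h1 : deriv ψ = fun t => -deriv φ (1 - t) := funext hψd
    rw [h1, deriv.fun_neg, deriv_comp_const_sub (deriv φ) 1 t, neg_neg]
  have key := SL_hopf μ hμ ψ hψreg (by simp [hψ, hφ1])
    (fun x hx => hφpos (1 - x) ⟨by linarith [hx.2], by linarith [hx.1]⟩)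
    (fun x hx => by
      rw [hψdd]
      exact hφode (1 - x) ⟨by linarith [hx.2], by linarith [hx.1]⟩)
  rw [hψd 0] at key
  simp only [sub_zero] at key
  linarith

lemma SL_span {u φ : ℝ → ℝ} (hu2 : ContDiff ℝ 2 u) (hφ2 : ContDiff ℝ 2 φ)
    (hu0 : u 0 = 0) (hu1 : u 1 = 0) (hφ0 : φ 0 = 0) (hφ1 : φ 1 = 0)
    (hφpos : ∀ x ∈ Set.Ioo (0:ℝ) 1, 0 < φ x)
    (hW : ∀ x ∈ Set.Ioo (0:ℝ) 1, deriv u x * φ x - u x * deriv φ x = 0) :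
    ∃ c : ℝ, ∀ x ∈ Set.Icc (0:ℝ) 1, u x = c * φ x := by
  obtain ⟨hud, -, -⟩ := SL_pack hu2
  obtain ⟨hφd, -, -⟩ := SL_pack hφ2
  set r : ℝ → ℝ := fun y => u y / φ y with hr
  have hrd : ∀ y ∈ Ioo (0:ℝ) 1, HasDerivAt r 0 y := by
    intro y hy
    have hφy : φ y ≠ 0 := ne_of_gt (hφpos y hy)
    have h := (hud y).hasDerivAt.div (hφd y).hasDerivAt hφy
    rw [hW y hy, zero_div] at h
    exact h
  have hconst : ∀ x ∈ Ioo (0:ℝ) 1, r x = r (1/2) := by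
    intro x hx
    set m := min x (1/2 : ℝ)
    set M := max x (1/2 : ℝ)
    have hmM : Icc m M ⊆ Ioo (0:ℝ) 1 := by
      intro y hy
      constructor
      · calc (0:ℝ) < m := lt_min hx.1 (by norm_num)
          _ ≤ y := hy.1
      · calc y ≤ M := hy.2
          _ < 1 := max_lt hx.2 (by norm_num)
    have hkey := constant_of_has_deriv_right_zero (f := r) (a := m) (b := M)
      (fun y hy => ((hrd y (hmM hy)).continuousAt.continuousWithinAt))
      (fun y hy => (hrd y (hmM (Ico_subset_Icc_self hy))).hasDerivWithinAt)
    have h1 := hkey x ⟨min_le_left _ _, le_max_left _ _⟩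
    have h2 := hkey (1/2) ⟨min_le_right _ _, le_max_right _ _⟩
    rw [h1, h2]
  refine ⟨r (1/2), ?_⟩
  intro x hx
  rcases eq_or_lt_of_le hx.1 with h0 | h0
  · rw [← h0, hu0, hφ0]; ring
  rcases eq_or_lt_of_le hx.2 with h1 | h1
  · rw [h1, hu1, hφ1]; ring
  have hxIoo : x ∈ Ioo (0:ℝ) 1 := ⟨h0, h1⟩
  have hφx : φ x ≠ 0 := ne_of_gt (hφpos x hxIoo)
  have := hconst x hxIoo
  field_simp [hr] at this
  rw [← this]; exact (div_mul_cancel₀ (u x) hφx).symm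

/-- The operator L₋ = −d²/dx² + μ − φ² (local copy for the aux lemmas). -/
noncomputable def LminusAux (μ : ℝ) (φ u : ℝ → ℝ) (x : ℝ) : ℝ :=
  -(deriv (deriv u) x) + μ * u x - (φ x)^2 * u x

lemma SL_g_hasDeriv (μ : ℝ) {u φ : ℝ → ℝ} (hu2 : ContDiff ℝ 2 u) (hφ2 : ContDiff ℝ 2 φ)
    {x : ℝ} (hφx : φ x ≠ 0)
    (hode : deriv (deriv φ) x = μ * φ x - (φ x)^3) :
    HasDerivAt (fun y => u y^2 * deriv φ y / φ y - u y * deriv u y)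
      (LminusAux μ φ u x * u x - (deriv u x - u x * deriv φ x / φ x)^2) x := by
  obtain ⟨hud, hud2, -⟩ := SL_pack hu2
  obtain ⟨hφd, hφd2, -⟩ := SL_pack hφ2
  have h1 : HasDerivAt (fun y => u y ^ 2) (2 * u x * deriv u x) x := by
    have := (hud x).hasDerivAt.pow 2
    exact this.congr_deriv (by norm_num)
  have hnum := h1.mul (hφd2 x).hasDerivAt
  have hfrac := hnum.div (hφd x).hasDerivAt hφx
  have hsecond := (hud x).hasDerivAt.mul (hud2 x).hasDerivAt
  have total := hfrac.sub hsecond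
  refine total.congr_deriv ?_
  rw [LminusAux, hode, Pi.mul_apply]
  field_simp
  ring

lemma SL_g_tendsto {u φ : ℝ → ℝ} (hu2 : ContDiff ℝ 2 u) (hφ2 : ContDiff ℝ 2 φ)
    {a : ℝ} (ha : a = 0 ∨ a = 1) (hu0 : u a = 0) (hφ0 : φ a = 0)
    (hd : deriv φ a ≠ 0)
    (hφpos : ∀ x ∈ Set.Ioo (0:ℝ) 1, 0 < φ x) :
    Tendsto (fun x => u x^2 * deriv φ x / φ x - u x * deriv u x)
      (𝓝[Ioo (0:ℝ) 1] a) (𝓝 0) := by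
  obtain ⟨hud, hud2, -⟩ := SL_pack hu2
  obtain ⟨hφd, hφd2, -⟩ := SL_pack hφ2
  set l := 𝓝[Ioo (0:ℝ) 1] a with hl
  have hsub : Ioo (0:ℝ) 1 ⊆ {a}ᶜ := by
    intro x hx
    rcases ha with h | h <;> simp only [mem_compl_iff, mem_singleton_iff] <;>
      [exact fun he => absurd (he ▸ hx.1) (by rw [h]; exact lt_irrefl 0);
       exact fun he => absurd (he ▸ hx.2) (by rw [h]; exact lt_irrefl 1)]
  have hmono : l ≤ 𝓝[{a}ᶜ] a := nhdsWithin_mono a hsub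
  have hslu : Tendsto (slope u a) l (𝓝 (deriv u a)) :=
    (hasDerivAt_iff_tendsto_slope.mp (hud a).hasDerivAt).mono_left hmono
  have hslφ : Tendsto (slope φ a) l (𝓝 (deriv φ a)) :=
    (hasDerivAt_iff_tendsto_slope.mp (hφd a).hasDerivAt).mono_left hmono
  have hxa : Tendsto (fun x => x - a) l (𝓝 0) := by
    have : Tendsto (fun x : ℝ => x - a) (𝓝 a) (𝓝 (a - a)) :=
      (continuous_id.sub continuous_const).tendsto a
    rw [sub_self] at this
    exact this.mono_left nhdsWithin_le_nhds
  have hφ' : Tendsto (fun x => deriv φ x) l (𝓝 (deriv φ a)) :=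
    (hφd2.continuous.tendsto a).mono_left nhdsWithin_le_nhds
  have huu' : Tendsto (fun x => u x * deriv u x) l (𝓝 0) := by
    have : Tendsto (fun x => u x * deriv u x) (𝓝 a) (𝓝 (u a * deriv u a)) :=
      (hud.continuous.mul hud2.continuous).tendsto a
    rw [hu0, zero_mul] at this
    exact this.mono_left nhdsWithin_le_nhds
  have hfirst : Tendsto (fun x => (slope u a x)^2 * (x - a) * deriv φ x / slope φ a x) l
      (𝓝 ((deriv u a)^2 * 0 * deriv φ a / deriv φ a)) :=
    (((hslu.pow 2).mul hxa).mul hφ').div hslφ hd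
  rw [show (deriv u a)^2 * 0 * deriv φ a / deriv φ a = 0 by ring] at hfirst
  have heq : ∀ᶠ x in l, (slope u a x)^2 * (x - a) * deriv φ x / slope φ a x
      - u x * deriv u x = u x^2 * deriv φ x / φ x - u x * deriv u x := by
    filter_upwards [eventually_mem_nhdsWithin] with x hx
    have hxa' : x - a ≠ 0 := sub_ne_zero.mpr (hsub hx)
    have hφx : φ x ≠ 0 := ne_of_gt (hφpos x hx)
    rw [slope_def_field, slope_def_field, hu0, hφ0, sub_zero, sub_zero]
    congr 1
    rw [div_eq_div_iff (div_ne_zero hφx hxa') hφx]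
    field_simp
  have := (hfirst.sub huu').congr' heq
  rw [sub_zero] at this
  exact this

lemma SL_cont_f (μ : ℝ) {u φ : ℝ → ℝ} (hu2 : ContDiff ℝ 2 u) (hφ2 : ContDiff ℝ 2 φ) :
    Continuous (fun x => LminusAux μ φ u x * u x) := by
  obtain ⟨hud, hud2, hucc⟩ := SL_pack hu2
  obtain ⟨hφd, -, -⟩ := SL_pack hφ2
  unfold LminusAux
  exact ((hucc.neg.add (continuous_const.mul hud.continuous)).sub
    ((hφd.continuous.pow 2).mul hud.continuous)).mul hud.continuous

lemma SL_cont_q {u φ : ℝ → ℝ} (hu2 : ContDiff ℝ 2 u) (hφ2 : ContDiff ℝ 2 φ)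
    (hφpos : ∀ x ∈ Set.Ioo (0:ℝ) 1, 0 < φ x) :
    ContinuousOn (fun x => (deriv u x - u x * deriv φ x / φ x)^2) (Ioo (0:ℝ) 1) := by
  obtain ⟨hud, hud2, -⟩ := SL_pack hu2
  obtain ⟨hφd, hφd2, -⟩ := SL_pack hφ2
  apply ContinuousOn.pow
  apply ContinuousOn.sub hud2.continuous.continuousOn
  exact ContinuousOn.div (hud.continuous.mul hφd2.continuous).continuousOn
    hφd.continuous.continuousOn (fun x hx => ne_of_gt (hφpos x hx))

lemma SL_integral_identity (μ : ℝ) {u φ : ℝ → ℝ}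
    (hu2 : ContDiff ℝ 2 u) (hφ2 : ContDiff ℝ 2 φ)
    (hφpos : ∀ x ∈ Set.Ioo (0:ℝ) 1, 0 < φ x)
    (hφode : ∀ x ∈ Set.Ioo (0:ℝ) 1,
      -(deriv (deriv φ) x) + μ * φ x - (φ x)^3 = 0)
    {a b : ℝ} (ha : a ∈ Ioo (0:ℝ) 1) (hb : b ∈ Ioo (0:ℝ) 1) (hab : a ≤ b) :
    ∫ x in a..b, LminusAux μ φ u x * u x =
      (∫ x in a..b, (deriv u x - u x * deriv φ x / φ x)^2)
      + ((u b^2 * deriv φ b / φ b - u b * deriv u b)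
         - (u a^2 * deriv φ a / φ a - u a * deriv u a)) := by
  have hsub : uIcc a b ⊆ Ioo (0:ℝ) 1 := by
    rw [uIcc_of_le hab]
    exact fun y hy => ⟨lt_of_lt_of_le ha.1 hy.1, lt_of_le_of_lt hy.2 hb.2⟩
  have hders : ∀ x ∈ uIcc a b,
      HasDerivAt (fun y => u y^2 * deriv φ y / φ y - u y * deriv u y)
        (LminusAux μ φ u x * u x - (deriv u x - u x * deriv φ x / φ x)^2) x := by
    intro x hx
    have hxI := hsub hx
    exact SL_g_hasDeriv μ hu2 hφ2 (ne_of_gt (hφpos x hxI))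
      (by have := hφode x hxI; linarith)
  have hif : IntervalIntegrable (fun x => LminusAux μ φ u x * u x) MeasureTheory.volume a b :=
    (SL_cont_f μ hu2 hφ2).intervalIntegrable a b
  have hiq : IntervalIntegrable (fun x => (deriv u x - u x * deriv φ x / φ x)^2)
      MeasureTheory.volume a b :=
    ((SL_cont_q hu2 hφ2 hφpos).mono hsub).intervalIntegrable
  have hint : IntervalIntegrable
      (fun x => LminusAux μ φ u x * u x - (deriv u x - u x * deriv φ x / φ x)^2)
      MeasureTheory.volume a b := hif.sub hiq
  have hftc := intervalIntegral.integral_eq_sub_of_hasDerivAt hders hint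
  rw [intervalIntegral.integral_sub hif hiq] at hftc
  linarith

lemma SL_main (μ : ℝ) (hμ : 0 < μ) (φ : ℝ → ℝ)
    (hφreg : ContDiff ℝ 2 φ) (hφ0 : φ 0 = 0) (hφ1 : φ 1 = 0)
    (hφpos : ∀ x ∈ Set.Ioo (0:ℝ) 1, 0 < φ x)
    (hφode : ∀ x ∈ Set.Ioo (0:ℝ) 1,
      -(deriv (deriv φ) x) + μ * φ x - (φ x)^3 = 0)
    (u : ℝ → ℝ) (hu2 : ContDiff ℝ 2 u) (hu0 : u 0 = 0) (hu1 : u 1 = 0) :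
    0 ≤ (∫ x in (0:ℝ)..1, LminusAux μ φ u x * u x) ∧
    ((∫ x in (0:ℝ)..1, LminusAux μ φ u x * u x) = 0 →
      ∀ x ∈ Ioo (0:ℝ) 1, deriv u x * φ x - u x * deriv φ x = 0) := by
  set f : ℝ → ℝ := fun x => LminusAux μ φ u x * u x with hf
  set q : ℝ → ℝ := fun x => (deriv u x - u x * deriv φ x / φ x)^2 with hq
  set g : ℝ → ℝ := fun x => u x^2 * deriv φ x / φ x - u x * deriv u x with hg
  have cont_f : Continuous f := SL_cont_f μ hu2 hφreg
  have cont_q : ContinuousOn q (Ioo (0:ℝ) 1) := SL_cont_q hu2 hφreg hφpos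
  set A : ℕ → ℝ := fun n => 1 / (n + 2 : ℝ) with hA
  set B : ℕ → ℝ := fun n => 1 - 1 / (n + 2 : ℝ) with hB
  have hAmem : ∀ n, A n ∈ Ioo (0:ℝ) 1 := by
    intro n
    have h2 : (0:ℝ) < (n:ℝ) + 2 := by positivity
    constructor
    · positivity
    · rw [div_lt_one h2]; linarith [Nat.cast_nonneg (α := ℝ) n]
  have hAhalf : ∀ n, A n ≤ 1/2 := by
    intro n
    have h2 : (2:ℝ) ≤ (n:ℝ) + 2 := by linarith [Nat.cast_nonneg (α := ℝ) n]
    exact div_le_div_of_nonneg_left (by norm_num) (by norm_num) h2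
  have hBmem : ∀ n, B n ∈ Ioo (0:ℝ) 1 := by
    intro n
    have h1 := (hAmem n).1
    have h2 := (hAmem n).2
    simp only [hA] at h1 h2
    simp only [hB]
    constructor <;> [linarith; linarith]
  have hAB : ∀ n, A n ≤ B n := by
    intro n
    have h1 := hAhalf n
    simp only [hA] at h1
    simp only [hA, hB]
    linarith
  have hAt : Tendsto A atTop (𝓝 0) := by
    have h1 : Tendsto (fun n : ℕ => (n:ℝ) + 2) atTop atTop :=
      tendsto_atTop_add_const_right atTop 2 tendsto_natCast_atTop_atTop
    simp only [hA, one_div]; exact (h1.inv_tendsto_atTop : Tendsto (fun n : ℕ => ((n:ℝ) + 2)⁻¹) atTop (𝓝 0))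
  have hBt : Tendsto B atTop (𝓝 1) := by
    have := tendsto_const_nhds (α := ℕ) (f := atTop) (x := (1:ℝ)) |>.sub hAt
    simpa using this
  have hA' : Tendsto A atTop (𝓝[Ioo (0:ℝ) 1] 0) :=
    tendsto_nhdsWithin_of_tendsto_nhds_of_eventually_within _ hAt
      (Eventually.of_forall hAmem)
  have hB' : Tendsto B atTop (𝓝[Ioo (0:ℝ) 1] 1) :=
    tendsto_nhdsWithin_of_tendsto_nhds_of_eventually_within _ hBt
      (Eventually.of_forall hBmem)
  have hd0 : deriv φ 0 ≠ 0 := ne_of_gt (SL_hopf μ hμ φ hφreg hφ0 hφpos hφode)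
  have hd1 : deriv φ 1 ≠ 0 := ne_of_lt (SL_hopf1 μ hμ φ hφreg hφ1 hφpos hφode)
  have hg0 : Tendsto g (𝓝[Ioo (0:ℝ) 1] 0) (𝓝 0) :=
    SL_g_tendsto hu2 hφreg (Or.inl rfl) hu0 hφ0 hd0 hφpos
  have hg1 : Tendsto g (𝓝[Ioo (0:ℝ) 1] 1) (𝓝 0) :=
    SL_g_tendsto hu2 hφreg (Or.inr rfl) hu1 hφ1 hd1 hφpos
  have hgA : Tendsto (fun n => g (A n)) atTop (𝓝 0) := hg0.comp hA'
  have hgB : Tendsto (fun n => g (B n)) atTop (𝓝 0) := hg1.comp hB'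
  have hident : ∀ n, ∫ x in A n..B n, f x =
      (∫ x in A n..B n, q x) + (g (B n) - g (A n)) := fun n =>
    SL_integral_identity μ hu2 hφreg hφpos hφode (hAmem n) (hBmem n) (hAB n)
  -- convergence of the truncated integrals of f
  set P : ℝ → ℝ := fun t => ∫ x in (0:ℝ)..t, f x with hP
  have hPc : Continuous P :=
    intervalIntegral.continuous_primitive (fun a b => cont_f.intervalIntegrable a b) 0
  have hPI : ∀ n, ∫ x in A n..B n, f x = P (B n) - P (A n) := fun n =>
    (intervalIntegral.integral_interval_sub_left (cont_f.intervalIntegrable 0 (B n))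
      (cont_f.intervalIntegrable 0 (A n))).symm
  have hIf : Tendsto (fun n => ∫ x in A n..B n, f x) atTop (𝓝 (∫ x in (0:ℝ)..1, f x)) := by
    have h1 : Tendsto (fun n => P (B n) - P (A n)) atTop (𝓝 (P 1 - P 0)) :=
      ((hPc.tendsto 1).comp hBt).sub ((hPc.tendsto 0).comp hAt)
    have hP0 : P 0 = 0 := intervalIntegral.integral_same
    rw [hP0, sub_zero] at h1
    exact Tendsto.congr (fun n => (hPI n).symm) h1
  have hqnonneg : ∀ n, 0 ≤ ∫ x in A n..B n, q x := fun n =>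
    intervalIntegral.integral_nonneg (hAB n) (fun x _ => sq_nonneg _)
  constructor
  · refine le_of_tendsto_of_tendsto' (f := fun n => g (B n) - g (A n))
      (g := fun n => ∫ x in A n..B n, f x) ?_ hIf ?_
    · simpa using hgB.sub hgA
    · intro n
      show g (B n) - g (A n) ≤ ∫ x in A n..B n, f x
      rw [hident n]; linarith [hqnonneg n]
  · intro hI x₀ hx₀
    have hφx₀ : φ x₀ ≠ 0 := ne_of_gt (hφpos x₀ hx₀)
    -- the truncated integrals of q tend to 0
    have hqT : Tendsto (fun n => ∫ x in A n..B n, q x) atTop (𝓝 0) := by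
      have h1 : Tendsto (fun n => (∫ x in A n..B n, f x) - (g (B n) - g (A n))) atTop
          (𝓝 ((∫ x in (0:ℝ)..1, f x) - (0 - 0))) := hIf.sub (hgB.sub hgA)
      rw [hI] at h1
      simp only [sub_zero, zero_sub, sub_neg_eq_add, zero_add, sub_self] at h1
      refine Tendsto.congr (fun n => ?_) h1
      rw [hident n]; ring
    -- if q x₀ > 0 we contradict the vanishing of the limit
    have hqx₀ : q x₀ = 0 := by
      by_contra hne
      have hqpos : 0 < q x₀ := lt_of_le_of_ne (sq_nonneg _) (Ne.symm hne)
      set a : ℝ := x₀ / 2 with ha'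
      set b : ℝ := (x₀ + 1) / 2 with hb'
      have haI : a ∈ Ioo (0:ℝ) 1 := ⟨by simp only [ha']; linarith [hx₀.1],
        by simp only [ha']; linarith [hx₀.2]⟩
      have hbI : b ∈ Ioo (0:ℝ) 1 := ⟨by simp only [hb']; linarith [hx₀.1],
        by simp only [hb']; linarith [hx₀.2]⟩
      have hab : a < b := by simp only [ha', hb']; linarith [hx₀.1, hx₀.2]
      have hsubI : Icc a b ⊆ Ioo (0:ℝ) 1 :=
        fun y hy => ⟨lt_of_lt_of_le haI.1 hy.1, lt_of_le_of_lt hy.2 hbI.2⟩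
      have hx₀ab : x₀ ∈ Icc a b := ⟨by simp only [ha']; linarith [hx₀.1],
        by simp only [hb']; linarith [hx₀.2]⟩
      have hposInt : 0 < ∫ x in a..b, q x :=
        intervalIntegral.integral_pos hab (cont_q.mono hsubI)
          (fun x _ => sq_nonneg _) ⟨x₀, hx₀ab, hqpos⟩
      have hev : ∀ᶠ n in atTop, (∫ x in a..b, q x) ≤ ∫ x in A n..B n, q x := by
        have hevA : ∀ᶠ n in atTop, A n < a := hAt.eventually_lt_const haI.1
        have hevB : ∀ᶠ n in atTop, b < B n := hBt.eventually_const_lt hbI.2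
        filter_upwards [hevA, hevB] with n h1 h2
        refine intervalIntegral.integral_mono_interval h1.le hab.le h2.le
          (MeasureTheory.ae_of_all _ (fun x => sq_nonneg _)) ?_
        refine ((cont_q.mono ?_).intervalIntegrable)
        rw [uIcc_of_le (hAB n)]
        exact fun y hy => ⟨lt_of_lt_of_le (hAmem n).1 hy.1, lt_of_le_of_lt hy.2 (hBmem n).2⟩
      have := ge_of_tendsto hqT hev
      linarith
    have h1 : deriv u x₀ - u x₀ * deriv φ x₀ / φ x₀ = 0 := by
      have := sq_eq_zero_iff.mp hqx₀
      exact this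
    field_simp at h1
    linarith

/-- Domain of the Sturm–Liouville operators: C² functions with Dirichlet conditions. -/
def Dom2 (u : ℝ → ℝ) : Prop := ContDiff ℝ 2 u ∧ u 0 = 0 ∧ u 1 = 0

/-- The operator L₋ = −d²/dx² + μ − φ². -/
noncomputable def Lminus (μ : ℝ) (φ u : ℝ → ℝ) (x : ℝ) : ℝ :=
  -(deriv (deriv u) x) + μ * u x - (φ x)^2 * u x

/-- ker L₋ = span{φ}, L₋ ≥ 0, and L₋ > 0 on the orthogonal complement of φ. -/
theorem Lminus_kernel_and_nonneg (μ : ℝ) (hμ : 0 < μ) (φ : ℝ → ℝ)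
    (hφreg : ContDiff ℝ 2 φ) (hφ0 : φ 0 = 0) (hφ1 : φ 1 = 0)
    (hφpos : ∀ x ∈ Set.Ioo (0:ℝ) 1, 0 < φ x)
    (hφode : ∀ x ∈ Set.Ioo (0:ℝ) 1,
      -(deriv (deriv φ) x) + μ * φ x - (φ x)^3 = 0) :
    -- φ belongs to the kernel of L₋
    (∀ x ∈ Set.Ioo (0:ℝ) 1, Lminus μ φ φ x = 0) ∧
    -- the kernel of L₋ is contained in span{φ}
    (∀ u : ℝ → ℝ, Dom2 u → (∀ x ∈ Set.Ioo (0:ℝ) 1, Lminus μ φ u x = 0) →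
      ∃ c : ℝ, ∀ x ∈ Set.Icc (0:ℝ) 1, u x = c * φ x) ∧
    -- L₋ is nonnegative: ⟨L₋u, u⟩ ≥ 0
    (∀ u : ℝ → ℝ, Dom2 u → 0 ≤ ∫ x in (0:ℝ)..1, Lminus μ φ u x * u x) ∧
    -- strict positivity on the orthogonal complement of φ
    (∀ u : ℝ → ℝ, Dom2 u → (∫ x in (0:ℝ)..1, u x * φ x) = 0 →
      (∫ x in (0:ℝ)..1, (u x)^2) ≠ 0 →
      0 < ∫ x in (0:ℝ)..1, Lminus μ φ u x * u x) := by
  have hLL : Lminus = LminusAux := rfl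
  obtain ⟨hφd, hφd2, hφcc⟩ := SL_pack hφreg
  refine ⟨?_, ?_, ?_, ?_⟩
  · -- φ in the kernel
    intro x hx
    have h := hφode x hx
    simp only [Lminus]
    have h3 : (φ x)^2 * φ x = (φ x)^3 := by ring
    linarith
  · -- kernel contained in span φ
    rintro u ⟨hu2, hu0, hu1⟩ hker
    obtain ⟨hud, hud2, hucc⟩ := SL_pack hu2
    set W : ℝ → ℝ := fun x => deriv u x * φ x - u x * deriv φ x with hWdef
    have hWd : ∀ x, HasDerivAt W
        (deriv (deriv u) x * φ x - u x * deriv (deriv φ) x) x := by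
      intro x
      have h := ((hud2 x).hasDerivAt.mul (hφd x).hasDerivAt).sub
        ((hud x).hasDerivAt.mul (hφd2 x).hasDerivAt)
      refine h.congr_deriv ?_
      ring
    have hD0 : ∀ x ∈ Icc (0:ℝ) 1,
        deriv (deriv u) x * φ x - u x * deriv (deriv φ) x = 0 := by
      apply SL_zero_on_Icc
      · exact (hucc.mul hφd.continuous).sub (hud.continuous.mul hφcc)
      · intro x hx
        have h1 := hker x hx
        have h2 := hφode x hx
        simp only [Lminus] at h1
        have e1 : deriv (deriv u) x = μ * u x - φ x^2 * u x := by linarith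
        have e2 : deriv (deriv φ) x = μ * φ x - φ x^3 := by linarith
        rw [e1, e2]; ring
    have hWconst := constant_of_has_deriv_right_zero (f := W) (a := 0) (b := 1)
      ((hud2.continuous.mul hφd.continuous).sub
        (hud.continuous.mul hφd2.continuous)).continuousOn
      (fun x hx => by
        have h := hWd x
        rw [hD0 x (Ico_subset_Icc_self hx)] at h
        exact h.hasDerivWithinAt)
    have hW0 : W 0 = 0 := by simp [hWdef, hu0, hφ0]
    have hW : ∀ x ∈ Ioo (0:ℝ) 1, deriv u x * φ x - u x * deriv φ x = 0 := by
      intro x hx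
      have := hWconst x (Ioo_subset_Icc_self hx)
      rw [hW0] at this
      exact this
    exact SL_span hu2 hφreg hu0 hu1 hφ0 hφ1 hφpos hW
  · -- nonnegativity
    rintro u ⟨hu2, hu0, hu1⟩
    rw [hLL]
    exact (SL_main μ hμ φ hφreg hφ0 hφ1 hφpos hφode u hu2 hu0 hu1).1
  · -- strict positivity on the orthogonal complement
    rintro u ⟨hu2, hu0, hu1⟩ horth hne
    have hmain := SL_main μ hμ φ hφreg hφ0 hφ1 hφpos hφode u hu2 hu0 hu1
    rw [hLL]
    rcases lt_or_eq_of_le hmain.1 with h | h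
    · exact h
    exfalso
    have hW := hmain.2 h.symm
    obtain ⟨c, hc⟩ := SL_span hu2 hφreg hu0 hu1 hφ0 hφ1 hφpos hW
    have hIcc : uIcc (0:ℝ) 1 = Icc (0:ℝ) 1 := uIcc_of_le (by norm_num)
    have horth2 : (∫ x in (0:ℝ)..1, u x * φ x) = c * ∫ x in (0:ℝ)..1, (φ x)^2 := by
      rw [← intervalIntegral.integral_const_mul]
      apply intervalIntegral.integral_congr
      intro x hx
      rw [hIcc] at hx
      show u x * φ x = c * (φ x)^2
      rw [hc x hx]; ring
    have hφ2pos : 0 < ∫ x in (0:ℝ)..1, (φ x)^2 := by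
      apply intervalIntegral.integral_pos (by norm_num)
      · exact (hφd.continuous.pow 2).continuousOn
      · exact fun x _ => sq_nonneg _
      · exact ⟨1/2, ⟨by norm_num, by norm_num⟩,
          pow_pos (hφpos (1/2) ⟨by norm_num, by norm_num⟩) 2⟩
    have hc0 : c = 0 := by
      rw [horth, eq_comm] at horth2
      rcases mul_eq_zero.mp horth2 with h' | h'
      · exact h'
      · exact absurd h' (ne_of_gt hφ2pos)
    have hu_zero : ∀ x ∈ Icc (0:ℝ) 1, u x = 0 := by
      intro x hx
      rw [hc x hx, hc0, zero_mul]
    apply hne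
    have heq : Set.EqOn (fun x => (u x)^2) (fun _ => (0:ℝ)) (uIcc (0:ℝ) 1) := by
      intro x hx
      rw [hIcc] at hx
      simp [hu_zero x hx]
    rw [intervalIntegral.integral_congr heq]
    simp
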